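/- Let f(p1,…,pK) be the single-carrier NOMA sum rate with gains g1 ≥ … ≥ gK > 0 and η > 0. If at some feasible point p we have p_k < P_k and p_h > 0 for indices k < h, then transferring a small amount ε > 0 of power from user h to user k (p_k + ε, p_h − ε, ε ≤ min(P_k − p_k, p_h)) does not decrease f. -/

import Mathlib

/-!
With the cumulative power `T m = ∑ j ≤ m, p j`, the rate of user `m` is
`log (T m * g m + η) - log (T (m - 1) * g m + η)`. Summation by parts writes the sum rate as
`∑ m < K - 1, (log (T m * g m + η) - log (T m * g (m + 1) + η))` plus a term depending only on
the total power; since `g (m + 1) ≤ g m`, each bracket is nondecreasing in `T m`. Moving power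
from `h` to `k < h` raises `T m` for `k ≤ m < h` and leaves every other `T m`, in particular the
total, unchanged.
-/

open Finset Real

theorem log_one_add_div {a b : ℝ} (hb : b ≠ 0) (hab : a + b ≠ 0) :
    log (1 + a / b) = log (a + b) - log b := by
  rw [← log_div hab hb, add_div, div_self hb, add_comm]

theorem monotoneOn_log_mul_add_sub_log_mul_add {a b η : ℝ} (hb : 0 ≤ b) (hba : b ≤ a)
    (hη : 0 < η) : MonotoneOn (fun s ↦ log (s * a + η) - log (s * b + η)) (Set.Ici 0) := by
  intro s (hs : 0 ≤ s) t (ht : 0 ≤ t) hst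
  have ha : 0 ≤ a := hb.trans hba
  dsimp only
  rw [sub_le_sub_iff, ← log_mul (by positivity) (by positivity),
    ← log_mul (by positivity) (by positivity)]
  apply log_le_log (by positivity)
  nlinarith [mul_nonneg (sub_nonneg.2 hst) (sub_nonneg.2 hba)]

theorem Function.update_add_update_sub_eq {ι M : Type*} [DecidableEq ι] [AddCommGroup M]
    (p : ι → M) {k h : ι} (hkh : k ≠ h) (ε : M) :
    Function.update (Function.update p k (p k + ε)) h (p h - ε) =
      p + Pi.single k ε - Pi.single h ε := by
  ext j
  rcases eq_or_ne j h with rfl | hjh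
  · simp [hkh]
  rcases eq_or_ne j k with rfl | hjk
  · simp [hjh]
  · simp [hjh, hjk]

theorem sum_Iic_le_sum_Iic_add_single_sub_single {ι : Type*} [Preorder ι]
    [LocallyFiniteOrderBot ι] [DecidableEq ι] {k h : ι} (hkh : k ≤ h) {ε : ℝ} (hε : 0 ≤ ε)
    (p : ι → ℝ) (m : ι) :
    ∑ j ∈ Iic m, p j ≤ ∑ j ∈ Iic m, (p + Pi.single k ε - Pi.single h ε : ι → ℝ) j := by
  simp only [Pi.add_apply, Pi.sub_apply, sum_add_distrib, sum_sub_distrib, sum_pi_single']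
  by_cases hhm : h ∈ Iic m
  · simp [hhm, mem_Iic.2 (hkh.trans (mem_Iic.1 hhm))]
  · simp only [hhm, if_false, sub_zero]
    split_ifs <;> linarith

noncomputable def sumRate {K : ℕ} (g : Fin K → ℝ) (η : ℝ) (p : Fin K → ℝ) : ℝ :=
  ∑ k : Fin K, log (1 + p k * g k / ((∑ j ∈ Iio k, p j * g k) + η))

theorem sumRate_summand_eq {K : ℕ} {g : Fin K → ℝ} {η : ℝ} (hg : 0 ≤ g) (hη : 0 < η)
    {p : Fin K → ℝ} (hp : 0 ≤ p) (m : Fin K) :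
    log (1 + p m * g m / ((∑ j ∈ Iio m, p j * g m) + η)) =
      log ((∑ j ∈ Iic m, p j) * g m + η) - log ((∑ j ∈ Iio m, p j) * g m + η) := by
  have hb : 0 < (∑ j ∈ Iio m, p j) * g m + η :=
    add_pos_of_nonneg_of_pos (mul_nonneg (sum_nonneg fun j _ ↦ hp j) (hg m)) hη
  have ha : 0 ≤ p m * g m := mul_nonneg (hp m) (hg m)
  rw [← sum_mul, log_one_add_div hb.ne' (by positivity), ← sum_Iio_add_eq_sum_Iic]
  ring_nf

theorem sumRate_eq_telescope {n : ℕ} {g : Fin (n + 1) → ℝ} {η : ℝ} (hg : 0 ≤ g) (hη : 0 < η)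
    {p : Fin (n + 1) → ℝ} (hp : 0 ≤ p) :
    sumRate g η p =
      ∑ i : Fin n, (log ((∑ j ∈ Iic i.castSucc, p j) * g i.castSucc + η) -
          log ((∑ j ∈ Iic i.castSucc, p j) * g i.succ + η)) +
        log ((∑ j, p j) * g (Fin.last n) + η) - log η := by
  have hIio (i : Fin n) : Iio i.succ = Iic i.castSucc := rfl
  simp only [sumRate, sumRate_summand_eq hg hη hp, sum_sub_distrib]
  rw [Fin.sum_univ_castSucc, Fin.sum_univ_succ]
  simp [← bot_eq_zero, hIio, ← Fin.top_eq_last]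
  ring

theorem sumRate_le_sumRate {n : ℕ} {g : Fin (n + 1) → ℝ} {η : ℝ} (hg : 0 ≤ g)
    (hanti : ∀ i : Fin n, g i.succ ≤ g i.castSucc) (hη : 0 < η) {p q : Fin (n + 1) → ℝ}
    (hp : 0 ≤ p) (hq : 0 ≤ q) (hcum : ∀ m, ∑ j ∈ Iic m, p j ≤ ∑ j ∈ Iic m, q j)
    (htotal : ∑ j, p j = ∑ j, q j) :
    sumRate g η p ≤ sumRate g η q := by
  rw [sumRate_eq_telescope hg hη hp, sumRate_eq_telescope hg hη hq, htotal]
  gcongr ?_ + _ - _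
  refine sum_le_sum fun i _ ↦ ?_
  exact monotoneOn_log_mul_add_sub_log_mul_add (hg _) (hanti i) hη
    (sum_nonneg fun j _ ↦ hp j) (sum_nonneg fun j _ ↦ hq j) (hcum _)

theorem noma_power_exchange_general (K : ℕ) (g : Fin K → ℝ) (η : ℝ)
    (hg : ∀ k, 0 < g k) (hsort : ∀ k l : Fin K, k ≤ l → g l ≤ g k) (hη : 0 < η)
    (f : (Fin K → ℝ) → ℝ)
    (hf : ∀ p : Fin K → ℝ, f p =
      ∑ k : Fin K,
        Real.log (1 + p k * g k / ((∑ j ∈ Finset.Iio k, p j * g k) + η)))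
    (p : Fin K → ℝ) (hp0 : ∀ k, 0 ≤ p k)
    (k h : Fin K) (hkh : k < h)
    (ε : ℝ) (hε : 0 < ε) (hεh : ε ≤ p h) :
    f p ≤ f (Function.update (Function.update p k (p k + ε)) h (p h - ε)) := by
  obtain ⟨n, rfl⟩ : ∃ n, K = n + 1 := ⟨K - 1, by have := k.pos; omega⟩
  rw [hf, hf, Function.update_add_update_sub_eq p hkh.ne]
  refine sumRate_le_sumRate (fun j ↦ (hg j).le) (fun i ↦ hsort _ _ i.castSucc_lt_succ.le) hη
    hp0 (fun j ↦ ?_) (sum_Iic_le_sum_Iic_add_single_sub_single hkh.le hε.le p)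
    (by simp [sum_add_distrib, sum_sub_distrib, sum_pi_single'])
  rcases eq_or_ne j h with rfl | hjh
  · simp [hkh.ne, hεh]
  · have := hp0 j
    simp only [Pi.add_apply, Pi.sub_apply, Pi.single_apply, hjh, if_false, sub_zero,
      Pi.zero_apply]
    split_ifs <;> linarith

/-- Exchange argument of Theorem 2: transferring a small amount of power from a
weaker user `h` to a stronger user `k < h` does not decrease the sum rate. -/
theorem noma_power_exchange (K : ℕ) (g P : Fin K → ℝ) (η : ℝ)
    (hg : ∀ k, 0 < g k) (hsort : ∀ k l : Fin K, k ≤ l → g l ≤ g k) (hη : 0 < η)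
    (f : (Fin K → ℝ) → ℝ)
    (hf : ∀ p : Fin K → ℝ, f p =
      ∑ k : Fin K,
        Real.log (1 + p k * g k / ((∑ j ∈ Finset.Iio k, p j * g k) + η)))
    (p : Fin K → ℝ) (hp0 : ∀ k, 0 ≤ p k) (hpP : ∀ k, p k ≤ P k)
    (k h : Fin K) (hkh : k < h) (hk : p k < P k) (hh : 0 < p h)
    (ε : ℝ) (hε : 0 < ε) (hεk : ε ≤ P k - p k) (hεh : ε ≤ p h) :
    f p ≤ f (Function.update (Function.update p k (p k + ε)) h (p h - ε)) :=
  noma_power_exchange_general K g η hg hsort hη f hf p hp0 k h hkh ε hε hεh
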